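/- arXiv:2201.02308 — 2 statements merged into one kernel-verified Lean document; each statement's English description precedes it below -/
import Mathlib

section
/- The map x_0 ↦ x_0 x_2^{-1}, x_1 ↦ x_1 x_2^{-1} extends to an injective group endomorphism of Thompson's group F. -/
/-- The defining relation of Thompson's monoid: `x_j x_i = x_i x_{j+1}` for `i < j`. -/
def thompsonRel : FreeMonoid ℕ → FreeMonoid ℕ → Prop := fun a b =>
  ∃ i j : ℕ, i < j ∧ a = FreeMonoid.of j * FreeMonoid.of i ∧
    b = FreeMonoid.of i * FreeMonoid.of (j + 1)

/-- The congruence on the free monoid generated by the Thompson relations. -/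
def thompsonCon : Con (FreeMonoid ℕ) := conGen thompsonRel

/-- Thompson's monoid `M`. -/
abbrev ThompsonM := thompsonCon.Quotient

/-- The generators `x_n` of Thompson's monoid. -/
def xM (n : ℕ) : ThompsonM := thompsonCon.mk' (FreeMonoid.of n)

/-- The shift endomorphism `φ : M → M`, `x_i ↦ x_{i+1}`. -/
def shiftM : ThompsonM →* ThompsonM :=
  Con.lift _ ((Con.mk' thompsonCon).comp (FreeMonoid.map Nat.succ)) (by
    apply Con.conGen_le.2
    rintro a b ⟨i, j, hij, rfl, rfl⟩
    simp only [Con.ker_rel, MonoidHom.comp_apply, map_mul, FreeMonoid.map_of]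
    exact Con.eq _ |>.2 (ConGen.Rel.of _ _ ⟨i + 1, j + 1, by omega, rfl, rfl⟩))

/-- The relators of Thompson's group `F` (infinite presentation). -/
def thompsonRels : Set (FreeGroup ℕ) :=
  {w | ∃ i j : ℕ, i < j ∧
    w = FreeGroup.of j * FreeGroup.of i * (FreeGroup.of i * FreeGroup.of (j + 1))⁻¹}

/-- Thompson's group `F`. -/
abbrev ThompsonF := PresentedGroup thompsonRels

/-- The generators `x_n` of Thompson's group. -/
def xF (n : ℕ) : ThompsonF := PresentedGroup.of n

/-- Word length, as a monoid homomorphism on the free monoid. -/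
def lenHom : FreeMonoid ℕ →* Multiplicative ℕ where
  toFun w := Multiplicative.ofAdd w.length
  map_one' := by simp
  map_mul' a b := by
    simp [FreeMonoid.length_mul, ofAdd_add]

/-- Length is well defined on Thompson's monoid. -/
def lenM : ThompsonM →* Multiplicative ℕ :=
  Con.lift _ lenHom (by
    apply Con.conGen_le.2
    rintro a b ⟨i, j, hij, rfl, rfl⟩
    show Multiplicative.ofAdd _ = Multiplicative.ofAdd _
    simp [FreeMonoid.length_mul])

/-- The length of an element of Thompson's monoid. -/
def mlen (g : ThompsonM) : ℕ := Multiplicative.toAdd (lenM g)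

/-- The degree of an element of the monoid ring `K[M]`. -/
noncomputable def mdeg {K : Type*} [Field K] (a : MonoidAlgebra K ThompsonM) : ℕ :=
  a.coeff.support.sup mlen

/-- The submonoid `M_i` of `M` generated by `x_i, x_{i+1}, …`. -/
def Msub (i : ℕ) : Submonoid ThompsonM :=
  Submonoid.closure {g | ∃ n : ℕ, i ≤ n ∧ g = xM n}

/-- The shift endomorphism of the monoid ring `K[M]` induced by `φ`. -/
noncomputable def shiftA (K : Type*) [Field K] :
    MonoidAlgebra K ThompsonM →+* MonoidAlgebra K ThompsonM :=
  MonoidAlgebra.mapDomainRingHom K shiftM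

/-- The natural homomorphism of Thompson's monoid into Thompson's group. -/
def iotaMF : ThompsonM →* ThompsonF :=
  Con.lift _ (FreeMonoid.lift xF) (by
    apply Con.conGen_le.2
    rintro a b ⟨i, j, hij, rfl, rfl⟩
    simp only [Con.ker_rel, map_mul, FreeMonoid.lift_eval_of]
    have h : (FreeGroup.of j * FreeGroup.of i *
        (FreeGroup.of i * FreeGroup.of (j + 1))⁻¹ : FreeGroup ℕ) ∈ thompsonRels :=
      ⟨i, j, hij, rfl⟩
    have h1 : PresentedGroup.mk thompsonRels
        (FreeGroup.of j * FreeGroup.of i * (FreeGroup.of i * FreeGroup.of (j + 1))⁻¹) = 1 := by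
      exact (QuotientGroup.eq_one_iff _).2 (Subgroup.subset_normalClosure h)
    have := h1
    rw [map_mul, map_mul, map_inv, map_mul, mul_inv_eq_one] at this
    simpa [xF, PresentedGroup.of] using this)

/-- The generator `x_n` as an element of the group ring `K[F]`. -/
noncomputable def XF (K : Type*) [Field K] (n : ℕ) : MonoidAlgebra K ThompsonF :=
  MonoidAlgebra.of K ThompsonF (xF n)

/-- The generator `x_n` as an element of the monoid ring `K[M]`. -/
noncomputable def XMa (K : Type*) [Field K] (n : ℕ) : MonoidAlgebra K ThompsonM :=
  MonoidAlgebra.of K ThompsonM (xM n)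

/-!
`F` acts faithfully on the Cantor space `𝒞 = {0,1}^ℕ`: `x_0` acts by `0s ↦ 00s`, `10s ↦ 01s`,
`11s ↦ 1s`, and `x_{n+1}` acts as `x_n` on the right half `1𝒞`, fixing `0𝒞`. Faithfulness: every
element is `p q⁻¹` with `p`, `q` positive words, a positive word can be sorted into
`x_{a₁} ⋯ x_{aₖ}` with `a₁ ≤ ⋯ ≤ aₖ`, and such a sorted word is recovered from its action (the
number of `x_0`'s from the image of `01^∞`, the rest from the action on `1𝒞`).

Let `σ : 𝒞 → 𝒞` be the injection `0s ↦ 0s`, `10s ↦ 10s`, `11s ↦ 110s`, whose image is the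
complement of `111𝒞`, and let `Θ` be the injective endomorphism of `Perm 𝒞` transporting a
permutation along `σ` and fixing `111𝒞` pointwise. Checking on cylinders gives
`Θ(x_0) = x_0 x_2⁻¹` and `Θ(x_1) = x_1 x_2⁻¹`. Hence `Θ` maps (the image of) `F` into itself, and
restricted to `F` it is the required injective endomorphism `ψ`.
-/

namespace Stream'

variable {α : Type*}

theorem exists_eq_cons (s : Stream' α) : ∃ (a : α) (t : Stream' α), s = a :: t :=
  ⟨s.head, s.tail, (Stream'.eta s).symm⟩

@[simp]
theorem cons_inj {a b : α} {s t : Stream' α} : a :: s = b :: t ↔ a = b ∧ s = t :=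
  cons_injective2.eq_iff

end Stream'

theorem List.exists_eq_replicate_append_map_succ {u : List ℕ} (hu : u.Pairwise (· ≤ ·)) :
    ∃ (k : ℕ) (u' : List ℕ), u = List.replicate k 0 ++ u'.map Nat.succ := by
  induction u with
  | nil => exact ⟨0, [], rfl⟩
  | cons a t ih =>
    rw [List.pairwise_cons] at hu
    obtain ⟨k, t', rfl⟩ := ih hu.2
    rcases a with _ | a
    · exact ⟨k + 1, t', rfl⟩
    · obtain rfl : k = 0 := by
        by_contra hk
        have := hu.1 0 (List.mem_append_left _ (List.mem_replicate.2 ⟨hk, rfl⟩))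
        omega
      exact ⟨0, List.cons a t', rfl⟩

namespace Thompson

open Equiv Function Stream'

abbrev Cantor := Stream' Bool

theorem xF_mul_xF_of_lt {i j : ℕ} (h : i < j) : xF j * xF i = xF i * xF (j + 1) := by
  have hrel : PresentedGroup.mk thompsonRels
      (FreeGroup.of j * FreeGroup.of i * (FreeGroup.of i * FreeGroup.of (j + 1))⁻¹) = 1 :=
    (QuotientGroup.eq_one_iff _).2 (Subgroup.subset_normalClosure ⟨i, j, h, rfl⟩)
  simp only [map_mul, map_inv, mul_inv_eq_one] at hrel
  exact hrel

theorem xF_inv_mul_xF_of_lt {i j : ℕ} (h : i < j) : (xF j)⁻¹ * xF i = xF i * (xF (j + 1))⁻¹ := by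
  rw [inv_mul_eq_iff_eq_mul, ← mul_assoc, xF_mul_xF_of_lt h, mul_inv_cancel_right]

theorem xF_inv_mul_xF_of_gt {i j : ℕ} (h : j < i) : (xF j)⁻¹ * xF i = xF (i + 1) * (xF j)⁻¹ := by
  rw [inv_mul_eq_iff_eq_mul, ← mul_assoc, ← xF_mul_xF_of_lt h, mul_inv_cancel_right]

section Lift

variable {G : Type*} [Group G]

def lift (g : ℕ → G) (hg : ∀ i j, i < j → g j * g i = g i * g (j + 1)) : ThompsonF →* G :=
  PresentedGroup.toGroup (f := g) <| by
    rintro r ⟨i, j, hij, rfl⟩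
    simpa only [map_mul, map_inv, FreeGroup.lift_apply_of, mul_inv_eq_one] using hg i j hij

@[simp]
theorem lift_xF (g : ℕ → G) (hg : ∀ i j, i < j → g j * g i = g i * g (j + 1)) (n : ℕ) :
    lift g hg (xF n) = g n :=
  PresentedGroup.toGroup.of _

end Lift

def word (w : List ℕ) : ThompsonF := (w.map xF).prod

@[simp] theorem word_nil : word [] = 1 := rfl

@[simp] theorem word_cons (a : ℕ) (w : List ℕ) : word (a :: w) = xF a * word w := by
  simp [word]

theorem word_append (u v : List ℕ) : word (u ++ v) = word u * word v := by
  simp [word]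

theorem exists_sorted_xF_mul_word (a : ℕ) {l : List ℕ} (hl : l.Pairwise (· ≤ ·)) :
    ∃ l' : List ℕ, l'.Pairwise (· ≤ ·) ∧ (∀ x ∈ l', a ≤ x ∨ x ∈ l) ∧
      word l' = xF a * word l := by
  induction l generalizing a with
  | nil => exact ⟨[a], by simp, by simp, by simp⟩
  | cons b t ih =>
    rw [List.pairwise_cons] at hl
    by_cases hab : a ≤ b
    · refine ⟨a :: b :: t, ?_, fun x hx => (List.mem_cons.1 hx).imp (·.ge) id, rfl⟩
      refine List.pairwise_cons.2 ⟨fun x hx => ?_, List.pairwise_cons.2 hl⟩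
      rcases List.mem_cons.1 hx with rfl | hx
      exacts [hab, hab.trans (hl.1 x hx)]
    · obtain ⟨t', ht', hmem, hword⟩ := ih (a + 1) hl.2
      refine ⟨b :: t', List.pairwise_cons.2 ⟨fun x hx => ?_, ht'⟩, fun x hx => ?_, ?_⟩
      · rcases hmem x hx with h | h
        · omega
        · exact hl.1 x h
      · rcases List.mem_cons.1 hx with rfl | hx
        · simp
        · rcases hmem x hx with h | h
          · left; omega
          · simp [h]
      · rw [word_cons, hword, word_cons, ← mul_assoc, ← mul_assoc,
          xF_mul_xF_of_lt (by omega : b < a)]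

theorem exists_sorted_word_eq (w : List ℕ) :
    ∃ l : List ℕ, l.Pairwise (· ≤ ·) ∧ word l = word w := by
  induction w with
  | nil => exact ⟨[], by simp, rfl⟩
  | cons a t ih =>
    obtain ⟨l, hl, hword⟩ := ih
    obtain ⟨l', hl', -, hword'⟩ := exists_sorted_xF_mul_word a hl
    exact ⟨l', hl', by rw [hword', hword, word_cons]⟩

theorem exists_word_eq_xF_inv_mul_word (n : ℕ) (w : List ℕ) :
    ∃ u v : List ℕ, (xF n)⁻¹ * word w = word u * (word v)⁻¹ := by
  induction w generalizing n with
  | nil => exact ⟨[], [n], by simp⟩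
  | cons j t ih =>
    rcases lt_trichotomy j n with h | rfl | h
    · obtain ⟨u, v, huv⟩ := ih (n + 1)
      refine ⟨j :: u, v, ?_⟩
      rw [word_cons, ← mul_assoc, xF_inv_mul_xF_of_lt h, mul_assoc, huv, word_cons, mul_assoc]
    · exact ⟨t, [], by simp⟩
    · obtain ⟨u, v, huv⟩ := ih n
      refine ⟨(j + 1) :: u, v, ?_⟩
      rw [word_cons, ← mul_assoc, xF_inv_mul_xF_of_gt h, mul_assoc, huv, word_cons, mul_assoc]

theorem exists_eq_word_mul_inv_word (g : ThompsonF) :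
    ∃ u v : List ℕ, g = word u * (word v)⁻¹ := by
  have hg : g ∈ Subgroup.closure (Set.range xF) := by
    rw [show xF = PresentedGroup.of from rfl, PresentedGroup.closure_range_of]
    exact Subgroup.mem_top g
  induction hg using Subgroup.closure_induction_left with
  | one => exact ⟨[], [], by simp⟩
  | mul_left _ hx _ _ ih =>
    obtain ⟨n, rfl⟩ := hx
    obtain ⟨u, v, rfl⟩ := ih
    exact ⟨n :: u, v, by rw [word_cons, mul_assoc]⟩
  | inv_mul_cancel _ hx _ _ ih =>
    obtain ⟨n, rfl⟩ := hx
    obtain ⟨u, v, rfl⟩ := ih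
    obtain ⟨u', v', huv⟩ := exists_word_eq_xF_inv_mul_word n u
    exact ⟨u', v ++ v', by rw [← mul_assoc, huv, word_append, mul_inv_rev, mul_assoc]⟩

def x0Perm : Perm Cantor where
  toFun s := cond s.head (cond s.tail.head s.tail (false :: true :: s.tail.tail)) (false :: s)
  invFun s := cond s.head (true :: s) (cond s.tail.head (true :: false :: s.tail.tail) s.tail)
  left_inv s := by
    obtain ⟨_ | _, s, rfl⟩ := exists_eq_cons s <;> obtain ⟨_ | _, s, rfl⟩ := exists_eq_cons s <;>
      simp
  right_inv s := by
    obtain ⟨_ | _, s, rfl⟩ := exists_eq_cons s <;> obtain ⟨_ | _, s, rfl⟩ := exists_eq_cons s <;>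
      simp

@[simp] theorem x0Perm_false (s : Cantor) : x0Perm (false :: s) = false :: false :: s := by
  simp [x0Perm]

@[simp] theorem x0Perm_true_false (s : Cantor) :
    x0Perm (true :: false :: s) = false :: true :: s := by
  simp [x0Perm]

@[simp] theorem x0Perm_true_true (s : Cantor) : x0Perm (true :: true :: s) = true :: s := by
  simp [x0Perm]

@[simp] theorem x0Perm_symm_true (s : Cantor) : x0Perm.symm (true :: s) = true :: true :: s := by
  rw [symm_apply_eq, x0Perm_true_true]

@[simp] theorem x0Perm_symm_false_false (s : Cantor) :
    x0Perm.symm (false :: false :: s) = false :: s := by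
  rw [symm_apply_eq, x0Perm_false]

@[simp] theorem x0Perm_symm_false_true (s : Cantor) :
    x0Perm.symm (false :: true :: s) = true :: false :: s := by
  rw [symm_apply_eq, x0Perm_true_false]

noncomputable def onRight : Perm Cantor →* Perm Cantor :=
  Perm.viaEmbeddingHom ⟨cons true, cons_injective_right true⟩

theorem onRight_injective : Injective onRight := Perm.viaEmbeddingHom_injective _

@[simp] theorem onRight_true (e : Perm Cantor) (s : Cantor) :
    onRight e (true :: s) = true :: e s :=
  Perm.viaEmbedding_apply e _ s

@[simp] theorem onRight_false (e : Perm Cantor) (s : Cantor) :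
    onRight e (false :: s) = false :: s :=
  Perm.viaEmbedding_apply_of_notMem e _ _ fun ⟨t, ht⟩ => by
    simpa using congrArg head ht

@[simp] theorem onRight_symm_true (e : Perm Cantor) (s : Cantor) :
    (onRight e).symm (true :: s) = true :: e.symm s := by
  rw [symm_apply_eq, onRight_true, apply_symm_apply]

@[simp] theorem onRight_symm_false (e : Perm Cantor) (s : Cantor) :
    (onRight e).symm (false :: s) = false :: s := by
  rw [symm_apply_eq, onRight_false]

noncomputable def cantorX : ℕ → Perm Cantor
  | 0 => x0Perm
  | n + 1 => onRight (cantorX n)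

@[simp] theorem cantorX_zero : cantorX 0 = x0Perm := rfl

@[simp] theorem cantorX_succ (n : ℕ) : cantorX (n + 1) = onRight (cantorX n) := rfl

theorem onRight_mul_x0Perm (e : Perm Cantor) :
    onRight e * x0Perm = x0Perm * onRight (onRight e) := by
  ext1 s
  obtain ⟨_ | _, s, rfl⟩ := exists_eq_cons s
  · simp
  · obtain ⟨_ | _, s, rfl⟩ := exists_eq_cons s <;> simp

theorem cantorX_mul_cantorX_of_lt {i j : ℕ} (h : i < j) :
    cantorX j * cantorX i = cantorX i * cantorX (j + 1) := by
  induction i generalizing j with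
  | zero =>
    obtain ⟨j, rfl⟩ := Nat.exists_eq_add_one.2 h
    exact onRight_mul_x0Perm _
  | succ i ih =>
    obtain ⟨j, rfl⟩ := Nat.exists_eq_add_one.2 (Nat.zero_lt_of_lt h)
    simp only [cantorX_succ, ← map_mul, ih (Nat.lt_of_succ_lt_succ h)]

noncomputable def cantorAction : ThompsonF →* Perm Cantor :=
  lift cantorX fun _ _ => cantorX_mul_cantorX_of_lt

@[simp] theorem cantorAction_xF (n : ℕ) : cantorAction (xF n) = cantorX n := lift_xF _ _ n

theorem cantorAction_word_map_succ (u : List ℕ) :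
    cantorAction (word (u.map Nat.succ)) = onRight (cantorAction (word u)) := by
  induction u with
  | nil => simp
  | cons a t ih => simp [ih]

theorem cantorAction_word_replicate_append_map_succ (k : ℕ) (u : List ℕ) :
    cantorAction (word (List.replicate k 0 ++ u.map Nat.succ)) =
      x0Perm ^ k * onRight (cantorAction (word u)) := by
  rw [word_append, map_mul, cantorAction_word_map_succ, word, List.map_replicate,
    List.prod_replicate, map_pow, cantorAction_xF, cantorX_zero]

def zerosThenOnes : ℕ → Cantor
  | 0 => const true
  | k + 1 => false :: zerosThenOnes k

theorem zerosThenOnes_injective : Injective zerosThenOnes := by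
  intro k l h
  induction k generalizing l with
  | zero => cases l with
    | zero => rfl
    | succ l => simpa [zerosThenOnes] using congrArg head h
  | succ k ih => cases l with
    | zero => simpa [zerosThenOnes] using congrArg head h
    | succ l => exact congrArg _ (ih (cons_injective_right _ h))

theorem x0Perm_pow_mul_onRight_zerosThenOnes_one (k : ℕ) (e : Perm Cantor) :
    (x0Perm ^ k * onRight e) (zerosThenOnes 1) = zerosThenOnes (k + 1) := by
  induction k with
  | zero => simp [zerosThenOnes]
  | succ k ih => rw [pow_succ', mul_assoc, Perm.mul_apply, ih, zerosThenOnes, x0Perm_false]; rfl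

theorem eq_of_cantorAction_word_eq_of_lt (B : ℕ) {u v : List ℕ} (hu : u.Pairwise (· ≤ ·))
    (hv : v.Pairwise (· ≤ ·)) (huB : ∀ a ∈ u, a < B) (hvB : ∀ a ∈ v, a < B)
    (h : cantorAction (word u) = cantorAction (word v)) : u = v := by
  induction B generalizing u v with
  | zero =>
    obtain rfl := List.eq_nil_iff_forall_not_mem.2 fun a ha => Nat.not_lt_zero a (huB a ha)
    obtain rfl := List.eq_nil_iff_forall_not_mem.2 fun a ha => Nat.not_lt_zero a (hvB a ha)
    rfl
  | succ B ih =>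
    obtain ⟨k, u', rfl⟩ := List.exists_eq_replicate_append_map_succ hu
    obtain ⟨l, v', rfl⟩ := List.exists_eq_replicate_append_map_succ hv
    rw [cantorAction_word_replicate_append_map_succ,
      cantorAction_word_replicate_append_map_succ] at h
    obtain rfl : k = l := by
      have h1 := congrArg (· (zerosThenOnes 1)) h
      simp only [x0Perm_pow_mul_onRight_zerosThenOnes_one] at h1
      exact Nat.succ_injective (zerosThenOnes_injective h1)
    have hsorted {w : List ℕ} (hw : (List.replicate k 0 ++ w.map Nat.succ).Pairwise (· ≤ ·)) :
        w.Pairwise (· ≤ ·) := by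
      simpa [List.pairwise_map] using (List.pairwise_append.1 hw).2.1
    have hpos {w : List ℕ} (hw : ∀ a ∈ List.replicate k 0 ++ w.map Nat.succ, a < B + 1) :
        ∀ a ∈ w, a < B := fun a ha => by
      simpa using hw (a + 1) (List.mem_append_right _ (List.mem_map_of_mem ha))
    rw [ih (hsorted hu) (hsorted hv) (hpos huB) (hpos hvB)
      (onRight_injective (mul_left_cancel h))]

theorem eq_of_cantorAction_word_eq {u v : List ℕ} (hu : u.Pairwise (· ≤ ·))
    (hv : v.Pairwise (· ≤ ·)) (h : cantorAction (word u) = cantorAction (word v)) : u = v :=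
  have hlt (a : ℕ) (ha : a ∈ u ++ v) : a < (u ++ v).sum + 1 :=
    Nat.lt_succ_of_le (List.le_sum_of_mem ha)
  eq_of_cantorAction_word_eq_of_lt _ hu hv (fun a ha => hlt a (List.mem_append_left _ ha))
    (fun a ha => hlt a (List.mem_append_right _ ha)) h

theorem cantorAction_injective : Injective cantorAction := by
  refine (injective_iff_map_eq_one _).2 fun g hg => ?_
  obtain ⟨u, v, rfl⟩ := exists_eq_word_mul_inv_word g
  obtain ⟨u', hu', hu⟩ := exists_sorted_word_eq u
  obtain ⟨v', hv', hv⟩ := exists_sorted_word_eq v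
  rw [map_mul, map_inv, mul_inv_eq_one, ← hu, ← hv] at hg
  rw [← hu, ← hv, eq_of_cantorAction_word_eq hu' hv' hg, mul_inv_cancel]

def squeeze (s : Cantor) : Cantor :=
  cond s.head (cond s.tail.head (true :: true :: false :: s.tail.tail) s) s

@[simp] theorem squeeze_false (s : Cantor) : squeeze (false :: s) = false :: s := by
  simp [squeeze]

@[simp] theorem squeeze_true_false (s : Cantor) :
    squeeze (true :: false :: s) = true :: false :: s := by
  simp [squeeze]

@[simp] theorem squeeze_true_true (s : Cantor) :
    squeeze (true :: true :: s) = true :: true :: false :: s := by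
  simp [squeeze]

theorem squeeze_injective : Injective squeeze := by
  intro s t h
  obtain ⟨_ | _, s, rfl⟩ := exists_eq_cons s <;> obtain ⟨_ | _, t, rfl⟩ := exists_eq_cons t
  all_goals obtain ⟨_ | _, s, rfl⟩ := exists_eq_cons s
  all_goals obtain ⟨_ | _, t, rfl⟩ := exists_eq_cons t
  all_goals simp_all

theorem exists_eq_of_notMem_range_squeeze {s : Cantor} (hs : s ∉ Set.range squeeze) :
    ∃ t : Cantor, s = true :: true :: true :: t := by
  obtain ⟨_ | _, s, rfl⟩ := exists_eq_cons s
  · exact absurd ⟨_, squeeze_false s⟩ hs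
  obtain ⟨_ | _, s, rfl⟩ := exists_eq_cons s
  · exact absurd ⟨_, squeeze_true_false s⟩ hs
  obtain ⟨_ | _, s, rfl⟩ := exists_eq_cons s
  · exact absurd ⟨_, squeeze_true_true s⟩ hs
  · exact ⟨s, rfl⟩

noncomputable def squeezeHom : Perm Cantor →* Perm Cantor :=
  Perm.viaEmbeddingHom ⟨squeeze, squeeze_injective⟩

theorem eq_squeezeHom_of {σ τ : Perm Cantor} (himage : ∀ s, σ (squeeze s) = squeeze (τ s))
    (hfix : ∀ s, σ (true :: true :: true :: s) = true :: true :: true :: s) :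
    σ = squeezeHom τ := by
  ext1 s
  by_cases hs : s ∈ Set.range squeeze
  · obtain ⟨s, rfl⟩ := hs
    exact (himage s).trans (Perm.viaEmbedding_apply τ ⟨squeeze, squeeze_injective⟩ s).symm
  · obtain ⟨t, rfl⟩ := exists_eq_of_notMem_range_squeeze hs
    exact (hfix t).trans (Perm.viaEmbedding_apply_of_notMem τ _ _ hs).symm

theorem squeezeHom_cantorX_of_lt_two {n : ℕ} (hn : n < 2) :
    squeezeHom (cantorX n) = cantorX n * (cantorX 2)⁻¹ := by
  interval_cases n <;> refine (eq_squeezeHom_of (fun s => ?_) fun s => by simp).symm <;>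
    obtain ⟨_ | _, s, rfl⟩ := exists_eq_cons s <;> obtain ⟨_ | _, s, rfl⟩ := exists_eq_cons s <;>
    obtain ⟨_ | _, s, rfl⟩ := exists_eq_cons s <;> simp

/-- For `n ≥ 1` these values are forced by `x_{n+1} = x_0⁻¹ x_n x_0`. -/
def psiGen : ℕ → ThompsonF
  | 0 => xF 0 * (xF 2)⁻¹
  | 1 => xF 1 * (xF 2)⁻¹
  | n + 2 => (psiGen 0)⁻¹ * psiGen (n + 1) * psiGen 0

theorem cantorAction_psiGen (n : ℕ) : cantorAction (psiGen n) = squeezeHom (cantorX n) := by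
  induction n using Nat.strong_induction_on with
  | _ n ih =>
    match n with
    | 0 | 1 => rw [psiGen, map_mul, map_inv, cantorAction_xF, cantorAction_xF,
        squeezeHom_cantorX_of_lt_two (by norm_num)]
    | n + 2 =>
      have hconj : cantorX (n + 2) = (cantorX 0)⁻¹ * cantorX (n + 1) * cantorX 0 := by
        rw [mul_assoc, cantorX_mul_cantorX_of_lt n.succ_pos, inv_mul_cancel_left]
      rw [psiGen, map_mul, map_mul, map_inv, ih 0 (by omega), ih (n + 1) (by omega), hconj,
        map_mul, map_mul, map_inv]

theorem psiGen_mul_psiGen_of_lt {i j : ℕ} (h : i < j) :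
    psiGen j * psiGen i = psiGen i * psiGen (j + 1) := by
  apply cantorAction_injective
  simp only [map_mul, cantorAction_psiGen]
  rw [← map_mul, ← map_mul, cantorX_mul_cantorX_of_lt h]

noncomputable def psi : ThompsonF →* ThompsonF :=
  lift psiGen fun _ _ => psiGen_mul_psiGen_of_lt

@[simp] theorem psi_xF (n : ℕ) : psi (xF n) = psiGen n := lift_xF _ _ n

theorem cantorAction_comp_psi : cantorAction.comp psi = squeezeHom.comp cantorAction :=
  PresentedGroup.ext fun n => by
    show cantorAction (psi (xF n)) = squeezeHom (cantorAction (xF n))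
    rw [psi_xF, cantorAction_xF, cantorAction_psiGen]

theorem psi_injective : Injective psi :=
  Injective.of_comp (f := cantorAction) <| by
    rw [← MonoidHom.coe_comp, cantorAction_comp_psi, MonoidHom.coe_comp]
    exact (Perm.viaEmbeddingHom_injective _).comp cantorAction_injective

end Thompson

/-- the map `x_0 ↦ x_0 x_2⁻¹`, `x_1 ↦ x_1 x_2⁻¹` extends to an
injective endomorphism of Thompson's group `F`. -/
theorem stmt4 :
    ∃ ψ : ThompsonF →* ThompsonF, Function.Injective ψ ∧
      ψ (xF 0) = xF 0 * (xF 2)⁻¹ ∧ ψ (xF 1) = xF 1 * (xF 2)⁻¹ :=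
  ⟨Thompson.psi, Thompson.psi_injective, by rw [Thompson.psi_xF, Thompson.psiGen],
    by rw [Thompson.psi_xF, Thompson.psiGen]⟩
end

section
/- Let b be a homogeneous element of degree d in the monoid ring K[M] of Thompson's monoid M, written as a polynomial in the generators x_i, ..., x_{i+s}. Then for any m > s, φ^m(b)·b = b·φ^{m+d}(b) in K[M], where φ is the shift endomorphism. In particular, the right ideals bR and φ^m(b)R have nonzero intersection when b ≠ 0. -/
theorem MonoidAlgebra.mapDomain_mul_eq_mul_mapDomain {k M : Type*} [CommSemiring k] [Mul M]
    {a c : MonoidAlgebra k M} {F₁ F₂ : M → M}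
    (hF : ∀ g ∈ a.coeff.support, ∀ h ∈ c.coeff.support, F₁ h * g = g * F₂ h) :
    mapDomain F₁ c * a = a * mapDomain F₂ c := by
  have hc : ∀ F : M → M, mapDomain F c = ∑ h ∈ c.coeff.support, single (F h) (c.coeff h) :=
    fun F => coeff_injective (by rw [coeff_sum]; rfl)
  have ha : a = ∑ g ∈ a.coeff.support, single g (a.coeff g) := (sum_coeff_single a).symm
  rw [hc, hc, ha, Finset.sum_mul_sum, Finset.sum_mul_sum, Finset.sum_comm]
  refine Finset.sum_congr rfl fun g hg => Finset.sum_congr rfl fun h hh => ?_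
  rw [single_mul_single, single_mul_single, hF g hg h hh, mul_comm]

theorem MonoidAlgebra.mul_mapDomain_ne_zero {k M N : Type*} [Semiring k] [NoZeroDivisors k]
    [Mul N] {a : MonoidAlgebra k N} {c : MonoidAlgebra k M} {F : M → N}
    (hF : F.Injective) (ha : a ≠ 0) (hc : c ≠ 0)
    (hinj : ∀ g ∈ a.coeff.support, ∀ g' ∈ a.coeff.support, ∀ h ∈ c.coeff.support,
      ∀ h' ∈ c.coeff.support, g * F h = g' * F h' → g = g' ∧ h = h') :
    a * mapDomain F c ≠ 0 := by
  classical
  obtain ⟨g₀, hg₀⟩ := Finsupp.support_nonempty_iff.2 (mt coeff_eq_zero.1 ha)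
  obtain ⟨h₀, hh₀⟩ := Finsupp.support_nonempty_iff.2 (mt coeff_eq_zero.1 hc)
  have hcoeff : (mapDomain F c).coeff (F h₀) = c.coeff h₀ := Finsupp.mapDomain_apply hF _ _
  have hunique : UniqueMul a.coeff.support (mapDomain F c).coeff.support g₀ (F h₀) := by
    intro g h' hg hh' heq
    obtain ⟨h, hh, rfl⟩ := Finset.mem_image.1 (Finsupp.mapDomain_support hh')
    obtain ⟨rfl, rfl⟩ := hinj g hg g₀ hg₀ h hh h₀ hh₀ heq
    exact ⟨rfl, rfl⟩
  intro h0
  have := coeff_mul_mul_of_uniqueMul hunique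
  rw [h0, hcoeff, coeff_zero, Finsupp.coe_zero, Pi.zero_apply] at this
  exact mul_ne_zero (Finsupp.mem_support_iff.1 hg₀) (Finsupp.mem_support_iff.1 hh₀) this.symm

theorem List.append_inj_of_forall {α : Type*} {p : α → Bool} {l₁ l₂ l₁' l₂' : List α}
    (h₁ : ∀ x ∈ l₁, p x) (h₁' : ∀ x ∈ l₁', p x) (h₂ : ∀ x ∈ l₂, ¬p x) (h₂' : ∀ x ∈ l₂', ¬p x)
    (h : l₁ ++ l₂ = l₁' ++ l₂') : l₁ = l₁' ∧ l₂ = l₂' := by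
  have hfilter : ∀ {l l' : List α}, (∀ x ∈ l, p x) → (∀ x ∈ l', ¬p x) →
      (l ++ l').filter p = l := fun hl hl' => by
    rw [filter_append, filter_eq_self.2 hl, filter_eq_nil_iff.2 hl', append_nil]
  have e : l₁ = l₁' := by rw [← hfilter h₁ h₂, ← hfilter h₁' h₂', h]
  subst e
  exact ⟨rfl, append_cancel_left h⟩

lemma xM_mul_xM {i j : ℕ} (h : i < j) : xM j * xM i = xM i * xM (j + 1) := by
  rw [xM, xM, xM, ← map_mul, ← map_mul]
  exact (Con.eq _).2 (ConGen.Rel.of _ _ ⟨i, j, h, rfl, rfl⟩)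

@[elab_as_elim]
lemma ThompsonM.induction_on {P : ThompsonM → Prop} (g : ThompsonM) (one : P 1)
    (xM_mul : ∀ n g, P g → P (xM n * g)) : P g := by
  obtain ⟨w, rfl⟩ := Con.mk'_surjective g
  induction w using FreeMonoid.inductionOn' with
  | one => exact one
  | of_mul n w ih => rw [map_mul]; exact xM_mul n _ ih

lemma mlen_mul (g h : ThompsonM) : mlen (g * h) = mlen g + mlen h := by
  simp [mlen]

lemma mlen_one : mlen 1 = 0 := by
  simp [mlen]

lemma mlen_xM (n : ℕ) : mlen (xM n) = 1 := rfl

lemma shiftM_xM (n : ℕ) : shiftM (xM n) = xM (n + 1) := rfl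

lemma iterate_shiftM_xM (k n : ℕ) : (⇑shiftM)^[k] (xM n) = xM (n + k) := by
  induction k with
  | zero => rfl
  | succ k ih => rw [Function.iterate_succ_apply', ih, shiftM_xM, Nat.add_assoc]

/-- Normal forms are the nondecreasing words `x_{n₁} ⋯ x_{n_k}`. We store them as reversed lists,
so that right multiplication by `x_a` acts at the head, using `x_c x_a = x_a x_{c+1}` for `a < c`. -/
def nfInsert (a : ℕ) : List ℕ → List ℕ
  | [] => [a]
  | c :: l => if a < c then (c + 1) :: nfInsert a l else a :: c :: l

lemma nfInsert_nfInsert {i j : ℕ} (h : i < j) (l : List ℕ) :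
    nfInsert i (nfInsert j l) = nfInsert (j + 1) (nfInsert i l) := by
  induction l with
  | nil => simp [nfInsert, h, show ¬j + 1 < i by omega]
  | cons c l ih =>
    by_cases hjc : j < c
    · simp [nfInsert, hjc, h.trans hjc, ih, show i < c + 1 by omega]
    · by_cases hic : i < c
      · simp [nfInsert, hjc, hic, h, show ¬j + 1 < c + 1 by omega]
      · simp [nfInsert, hjc, hic, h, show ¬j + 1 < i by omega]

def nfActHom : ThompsonM →* (Function.End (List ℕ))ᵐᵒᵖ :=
  Con.lift _ (FreeMonoid.lift fun a => MulOpposite.op (nfInsert a)) (by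
    apply Con.conGen_le.2
    rintro _ _ ⟨i, j, hij, rfl, rfl⟩
    simp only [Con.ker_rel, map_mul, FreeMonoid.lift_eval_of]
    exact congrArg MulOpposite.op (funext (nfInsert_nfInsert hij)))

def nfAct (g : ThompsonM) : List ℕ → List ℕ := (nfActHom g).unop

def nf (g : ThompsonM) : List ℕ := nfAct g []

def nfVal (l : List ℕ) : ThompsonM := (l.map xM).reverse.prod

lemma nfAct_one (l : List ℕ) : nfAct 1 l = l := by
  simp [nfAct]; rfl

lemma nfAct_mul (g h : ThompsonM) (l : List ℕ) : nfAct (g * h) l = nfAct h (nfAct g l) := by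
  simp only [nfAct, map_mul, MulOpposite.unop_mul]
  rfl

lemma nfAct_xM (n : ℕ) (l : List ℕ) : nfAct (xM n) l = nfInsert n l := rfl

lemma nfVal_cons (c : ℕ) (l : List ℕ) : nfVal (c :: l) = nfVal l * xM c := by
  simp [nfVal]

lemma nfVal_nfInsert (a : ℕ) (l : List ℕ) : nfVal (nfInsert a l) = nfVal l * xM a := by
  induction l with
  | nil => simp [nfInsert, nfVal]
  | cons c l ih =>
    by_cases h : a < c
    · rw [nfInsert, if_pos h, nfVal_cons, ih, nfVal_cons, mul_assoc, mul_assoc, xM_mul_xM h]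
    · rw [nfInsert, if_neg h, nfVal_cons]

lemma nfVal_nfAct (g : ThompsonM) (l : List ℕ) : nfVal (nfAct g l) = nfVal l * g := by
  induction g using ThompsonM.induction_on generalizing l with
  | one => rw [nfAct_one, mul_one]
  | xM_mul n g ih => rw [nfAct_mul, ih, nfAct_xM, nfVal_nfInsert, mul_assoc]

lemma nfVal_nf (g : ThompsonM) : nfVal (nf g) = g := by
  rw [nf, nfVal_nfAct, nfVal, List.map_nil, List.reverse_nil, List.prod_nil, one_mul]

lemma nf_injective : Function.Injective nf :=
  Function.LeftInverse.injective nfVal_nf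

lemma nfInsert_map_succ (a : ℕ) (l : List ℕ) :
    nfInsert (a + 1) (l.map Nat.succ) = (nfInsert a l).map Nat.succ := by
  induction l with
  | nil => rfl
  | cons c l ih => by_cases h : a < c <;> simp [nfInsert, h, ih]

lemma nf_shiftM (g : ThompsonM) : nf (shiftM g) = (nf g).map Nat.succ := by
  suffices ∀ l, nfAct (shiftM g) (l.map Nat.succ) = (nfAct g l).map Nat.succ from this []
  induction g using ThompsonM.induction_on with
  | one => simp [nfAct_one]
  | xM_mul n g ih =>
    intro l
    rw [map_mul, shiftM_xM, nfAct_mul, nfAct_mul, nfAct_xM, nfAct_xM, nfInsert_map_succ, ih]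

lemma shiftM_injective : Function.Injective shiftM := fun g g' h =>
  nf_injective <| List.map_injective_iff.2 Nat.succ_injective <| by
    rw [← nf_shiftM, ← nf_shiftM, h]

def MsubLe (b : ℕ) : Submonoid ThompsonM :=
  Submonoid.closure {g | ∃ n : ℕ, n ≤ b ∧ g = xM n}

lemma closure_xM_Icc_le (a b : ℕ) :
    Submonoid.closure {g : ThompsonM | ∃ n : ℕ, a ≤ n ∧ n ≤ b ∧ g = xM n} ≤ Msub a ⊓ MsubLe b :=
  le_inf (Submonoid.closure_mono fun _ ⟨n, ha, _, hg⟩ => ⟨n, ha, hg⟩)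
    (Submonoid.closure_mono fun _ ⟨n, _, hb, hg⟩ => ⟨n, hb, hg⟩)

lemma iterate_shiftM_mem_Msub {a : ℕ} {h : ThompsonM} (hh : h ∈ Msub a) (k : ℕ) :
    (⇑shiftM)^[k] h ∈ Msub (a + k) := by
  induction hh using Submonoid.closure_induction with
  | mem _ hx =>
    obtain ⟨n, hn, rfl⟩ := hx
    rw [iterate_shiftM_xM]
    exact Submonoid.subset_closure ⟨n + k, by omega, rfl⟩
  | one => rw [iterate_map_one]; exact one_mem _
  | mul _ _ _ _ ih₁ ih₂ => rw [iterate_map_mul]; exact mul_mem ih₁ ih₂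

lemma xM_mul_eq_mul_xM {b : ℕ} {g : ThompsonM} (hg : g ∈ MsubLe b) {k : ℕ} (hk : b < k) :
    xM k * g = g * xM (k + mlen g) := by
  induction hg using Submonoid.closure_induction generalizing k with
  | mem _ hx =>
    obtain ⟨n, hn, rfl⟩ := hx
    exact xM_mul_xM (by omega)
  | one => rw [one_mul, mul_one, mlen_one, Nat.add_zero]
  | mul g₁ g₂ _ _ ih₁ ih₂ =>
    rw [← mul_assoc, ih₁ hk, mul_assoc, ih₂ (by omega), mlen_mul, ← mul_assoc, Nat.add_assoc]

lemma mul_eq_mul_iterate_shiftM {a b : ℕ} (hba : b < a) {h g : ThompsonM} (hh : h ∈ Msub a)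
    (hg : g ∈ MsubLe b) : h * g = g * (⇑shiftM)^[mlen g] h := by
  induction hh using Submonoid.closure_induction with
  | mem _ hx =>
    obtain ⟨k, hk, rfl⟩ := hx
    rw [xM_mul_eq_mul_xM hg (hba.trans_le hk), iterate_shiftM_xM]
  | one => rw [one_mul, iterate_map_one, mul_one]
  | mul h₁ h₂ _ _ ih₁ ih₂ => rw [mul_assoc, ih₂, ← mul_assoc, ih₁, mul_assoc, iterate_map_mul]

lemma nfInsert_le {a C : ℕ} {l : List ℕ} (hl : ∀ x ∈ l, x ≤ C) (ha : a ≤ C) :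
    ∀ x ∈ nfInsert a l, x ≤ C + 1 := by
  induction l with
  | nil => simpa [nfInsert] using by omega
  | cons c l ih =>
    have hc := hl c List.mem_cons_self
    by_cases h : a < c
    · simp only [nfInsert, if_pos h, List.forall_mem_cons]
      exact ⟨by omega, ih fun x hx => hl x (List.mem_cons_of_mem _ hx)⟩
    · simp only [nfInsert, if_neg h, List.forall_mem_cons]
      exact ⟨by omega, by omega, fun x hx => (hl x (List.mem_cons_of_mem _ hx)).trans C.le_succ⟩

lemma nfAct_le {b C : ℕ} {g : ThompsonM} (hg : g ∈ MsubLe b) (hbC : b ≤ C) {l : List ℕ}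
    (hl : ∀ x ∈ l, x ≤ C) : ∀ x ∈ nfAct g l, x ≤ C + mlen g := by
  induction hg using Submonoid.closure_induction generalizing C l with
  | mem _ hx =>
    obtain ⟨n, hn, rfl⟩ := hx
    exact nfInsert_le hl (hn.trans hbC)
  | one => simpa [nfAct_one, mlen_one] using hl
  | mul g₁ g₂ _ _ ih₁ ih₂ =>
    rw [nfAct_mul, mlen_mul, ← Nat.add_assoc]
    exact ih₂ (by omega) (ih₁ hbC hl)

lemma nf_le {b : ℕ} {g : ThompsonM} (hg : g ∈ MsubLe b) : ∀ x ∈ nf g, x ≤ b + mlen g :=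
  nfAct_le hg le_rfl (by simp)

lemma nfInsert_append {N a : ℕ} {l₁ l₂ : List ℕ} (h₁ : ∀ x ∈ l₁, N ≤ x) (h₂ : ∀ x ∈ l₂, x < N)
    (ha : N ≤ a) :
    nfInsert a (l₁ ++ l₂) = nfInsert a l₁ ++ l₂ ∧ ∀ x ∈ nfInsert a l₁, N ≤ x := by
  induction l₁ with
  | nil =>
    cases l₂ with
    | nil => simpa [nfInsert]
    | cons c l₂ => simpa [nfInsert, show ¬a < c by have := h₂ c List.mem_cons_self; omega]
  | cons c l₁ ih =>
    have hc := h₁ c List.mem_cons_self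
    obtain ⟨ih₁, ih₂⟩ := ih fun x hx => h₁ x (List.mem_cons_of_mem _ hx)
    by_cases h : a < c
    · simp only [List.cons_append, nfInsert, if_pos h, ih₁, List.forall_mem_cons, true_and]
      exact ⟨by omega, ih₂⟩
    · simp only [List.cons_append, nfInsert, if_neg h, true_and, List.forall_mem_cons]
      exact ⟨ha, hc, fun x hx => h₁ x (List.mem_cons_of_mem _ hx)⟩

lemma nfAct_append {N : ℕ} {h : ThompsonM} (hh : h ∈ Msub N) {l₁ l₂ : List ℕ}
    (h₁ : ∀ x ∈ l₁, N ≤ x) (h₂ : ∀ x ∈ l₂, x < N) :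
    nfAct h (l₁ ++ l₂) = nfAct h l₁ ++ l₂ ∧ ∀ x ∈ nfAct h l₁, N ≤ x := by
  induction hh using Submonoid.closure_induction generalizing l₁ with
  | mem _ hx =>
    obtain ⟨n, hn, rfl⟩ := hx
    exact nfInsert_append h₁ h₂ hn
  | one => simpa [nfAct_one] using h₁
  | mul g₁ g₂ _ _ ih₁ ih₂ =>
    obtain ⟨e₁, b₁⟩ := ih₁ h₁
    rw [nfAct_mul, nfAct_mul, e₁]
    exact ih₂ b₁

lemma nf_mul_of_mem_Msub {N : ℕ} {g h : ThompsonM} (hg : ∀ x ∈ nf g, x < N) (hh : h ∈ Msub N) :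
    nf (g * h) = nf h ++ nf g ∧ ∀ x ∈ nf h, N ≤ x := by
  simpa [nf, nfAct_mul] using nfAct_append hh (l₁ := []) (by simp) hg

/-- The reversed normal form of `g * h` is that of `h` followed by that of `g`, and the threshold `N`
tells where one ends and the other begins. -/
lemma mul_inj_of_nf_lt_of_mem_Msub {N : ℕ} {g g' h h' : ThompsonM} (hg : ∀ x ∈ nf g, x < N)
    (hg' : ∀ x ∈ nf g', x < N) (hh : h ∈ Msub N) (hh' : h' ∈ Msub N) (heq : g * h = g' * h') :
    g = g' ∧ h = h' := by
  obtain ⟨e, hN⟩ := nf_mul_of_mem_Msub hg hh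
  obtain ⟨e', hN'⟩ := nf_mul_of_mem_Msub hg' hh'
  have := List.append_inj_of_forall (p := fun x => decide (N ≤ x)) (by simpa using hN)
    (by simpa using hN') (by simpa using hg) (by simpa using hg') (e.symm.trans (heq ▸ e'))
  exact ⟨nf_injective this.2, nf_injective this.1⟩

lemma mul_iterate_shiftM_inj {a b d k : ℕ} (hk : b + d < a + k) {g g' h h' : ThompsonM}
    (hg : g ∈ MsubLe b) (hg' : g' ∈ MsubLe b) (hgd : mlen g ≤ d) (hg'd : mlen g' ≤ d)
    (hh : h ∈ Msub a) (hh' : h' ∈ Msub a)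
    (heq : g * (⇑shiftM)^[k] h = g' * (⇑shiftM)^[k] h') : g = g' ∧ h = h' := by
  obtain ⟨rfl, e⟩ := mul_inj_of_nf_lt_of_mem_Msub
    (fun x hx => by have := nf_le hg x hx; omega) (fun x hx => by have := nf_le hg' x hx; omega)
    (iterate_shiftM_mem_Msub hh k) (iterate_shiftM_mem_Msub hh' k) heq
  exact ⟨rfl, shiftM_injective.iterate k e⟩

lemma iterate_shiftA {K : Type*} [Field K] (n : ℕ) (b : MonoidAlgebra K ThompsonM) :
    (⇑(shiftA K))^[n] b = MonoidAlgebra.mapDomain (⇑shiftM)^[n] b := by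
  induction n generalizing b with
  | zero => ext; simp
  | succ n ih =>
    rw [Function.iterate_succ_apply, ih, Function.iterate_succ]
    apply MonoidAlgebra.coeff_injective
    simp only [MonoidAlgebra.coeff_mapDomain, Finsupp.mapDomain_comp]
    rfl

/-- for a homogeneous `b ∈ K[M]` of degree `d` in the variables
`x_i, …, x_{i+s}` and any `m > s`, `φ^m(b)·b = b·φ^{m+d}(b)`; in particular, if
`b ≠ 0` the right ideals `bR` and `φ^m(b)R` intersect nontrivially. -/
theorem stmt7 (K : Type*) [Field K] (b : MonoidAlgebra K ThompsonM) (d i s m : ℕ)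
    (hvars : ∀ g ∈ b.coeff.support,
      g ∈ Submonoid.closure {h : ThompsonM | ∃ t : ℕ, i ≤ t ∧ t ≤ i + s ∧ h = xM t})
    (hhom : ∀ g ∈ b.coeff.support, mlen g = d)
    (hm : s < m) :
    (⇑(shiftA K))^[m] b * b = b * (⇑(shiftA K))^[m + d] b ∧
    (b ≠ 0 → ∃ r t : MonoidAlgebra K ThompsonM,
      b * r = (⇑(shiftA K))^[m] b * t ∧ b * r ≠ 0) := by
  have hsupp : ∀ g ∈ b.coeff.support, g ∈ Msub i ∧ g ∈ MsubLe (i + s) := fun g hg =>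
    Submonoid.mem_inf.1 (closure_xM_Icc_le i (i + s) (hvars g hg))
  have hcomm : (⇑(shiftA K))^[m] b * b = b * (⇑(shiftA K))^[m + d] b := by
    rw [iterate_shiftA, iterate_shiftA]
    refine MonoidAlgebra.mapDomain_mul_eq_mul_mapDomain fun g hg h hh => ?_
    rw [mul_eq_mul_iterate_shiftM (by omega) (iterate_shiftM_mem_Msub (hsupp h hh).1 m)
      (hsupp g hg).2, hhom g hg, ← Function.iterate_add_apply, Nat.add_comm]
  refine ⟨hcomm, fun hb => ⟨_, b, hcomm.symm, ?_⟩⟩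
  rw [iterate_shiftA]
  exact MonoidAlgebra.mul_mapDomain_ne_zero (shiftM_injective.iterate _) hb hb
    fun g hg g' hg' h hh h' hh' => mul_iterate_shiftM_inj (by omega) (hsupp g hg).2
      (hsupp g' hg').2 (hhom g hg).le (hhom g' hg').le (hsupp h hh).1 (hsupp h' hh').1
end
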